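/- Generation-counting virus: for every partial recursive f : ℕ →. ℕ of four (paired) arguments, there exist a code e and a total computable Φ : ℕ → ℕ computed by e (φ_e(y) = Φ(y) for all y) such that for all y, x: φ_{Φ(y)}(x) = f(⟨e, y, x⟩); consequently, defining the infected form at generation y as Φ(y+1), running the infected form computes f(⟨e, y+1, x⟩), so each successive generation carries an incremented counter. -/

import Mathlib

/-- The `e`-th partial computable function in a standard Gödel numbering. -/
def phi (e : ℕ) : ℕ →. ℕ :=
  (Denumerable.ofNat Nat.Partrec.Code e).eval

open Nat.Partrec Encodable

theorem phi_encode (c : Code) : phi (encode c) = c.eval := by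
  simp [phi]

def curryTwice (cf : Code) (e y : ℕ) : Code :=
  (cf.curry e).curry y

theorem phi_encode_curryTwice (cf : Code) (e y x : ℕ) :
    phi (encode (curryTwice cf e y)) x = cf.eval (Nat.pair e (Nat.pair y x)) := by
  simp [phi_encode, curryTwice, Code.eval_curry]

theorem primrec₂_curryTwice (cf : Code) : Primrec₂ (curryTwice cf) :=
  Code.primrec₂_curry.comp (Code.primrec₂_curry.comp (Primrec.const cf) Primrec.fst)
    Primrec.snd

theorem explicit_recursion_with_parameter (f : ℕ →. ℕ) (hf : Nat.Partrec f) :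
    ∃ (e : ℕ) (Φ : ℕ → ℕ), Computable Φ ∧
      (∀ y : ℕ, phi e y = Part.some (Φ y)) ∧
      (∀ y x : ℕ, phi (Φ y) x = f (Nat.pair e (Nat.pair y x))) := by
  obtain ⟨cf, rfl⟩ := Code.exists_code.1 hf
  have hF : Partrec₂ fun (c : Code) (y : ℕ) =>
      Part.some (encode (curryTwice cf (encode c) y)) :=
    (Primrec.encode.comp ((primrec₂_curryTwice cf).comp
      (Primrec.encode.comp Primrec.fst) Primrec.snd)).to_comp.partrec
  -- Kleene's second recursion theorem for `c ↦ (y ↦ index of x ↦ f ⟨encode c, y, x⟩)`.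
  obtain ⟨c, hc⟩ := Code.fixed_point₂ hF
  refine ⟨encode c, fun y => encode (curryTwice cf (encode c) y), ?_, ?_,
    phi_encode_curryTwice cf (encode c)⟩
  · exact (Primrec.encode.comp
      ((primrec₂_curryTwice cf).comp (Primrec.const _) Primrec.id)).to_comp
  · intro y
    rw [phi_encode, hc]

/-- Generation-counting virus: the explicit recursion theorem plus the
observation that the infected form at generation `y`, taken as `Φ (y+1)`,
computes `f(⟨e, y+1, x⟩)`, carrying an incremented counter. -/
theorem generation_counting_virus (f : ℕ →. ℕ) (hf : Nat.Partrec f) :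
    ∃ (e : ℕ) (Φ : ℕ → ℕ), Computable Φ ∧
      (∀ y : ℕ, phi e y = Part.some (Φ y)) ∧
      (∀ y x : ℕ, phi (Φ y) x = f (Nat.pair e (Nat.pair y x))) ∧
      (∀ y x : ℕ, phi (Φ (y + 1)) x = f (Nat.pair e (Nat.pair (y + 1) x))) := by
  obtain ⟨e, Φ, hΦ, he, hgen⟩ := explicit_recursion_with_parameter f hf
  exact ⟨e, Φ, hΦ, he, hgen, fun y => hgen (y + 1)⟩
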